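/- The generalized Heisenberg algebra H(f) is a commutative K-algebra if and only if f = t. In that case H(f) is isomorphic to the polynomial ring K[t,x,y]. -/

import Mathlib

/- STATEMENT 9: the generalized Heisenberg algebra H(f) is commutative iff f = t,
in which case it is isomorphic to the polynomial ring K[t,x,y]. -/

noncomputable section

open FreeAlgebra Polynomial

variable (K : Type) [Field K]

/-- Relations of the generalized Heisenberg algebra `H(f)`. t = ι 0, x = ι 1, y = ι 2. -/
inductive ghaRel (f : Polynomial K) : FreeAlgebra K (Fin 3) → FreeAlgebra K (Fin 3) → Prop
  | r1 : ghaRel f (ι K (0 : Fin 3) * ι K (1 : Fin 3))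
      (ι K (1 : Fin 3) * Polynomial.aeval (ι K (0 : Fin 3)) f)
  | r2 : ghaRel f (ι K (2 : Fin 3) * ι K (0 : Fin 3))
      (Polynomial.aeval (ι K (0 : Fin 3)) f * ι K (2 : Fin 3))
  | r3 : ghaRel f (ι K (2 : Fin 3) * ι K (1 : Fin 3) - ι K (1 : Fin 3) * ι K (2 : Fin 3))
      (Polynomial.aeval (ι K (0 : Fin 3)) f - ι K (0 : Fin 3))

/-- The generalized Heisenberg algebra `H(f)`. -/
abbrev GHA (f : Polynomial K) := RingQuot (ghaRel K f)

/-! If `H(f)` is commutative then `yx - xy = f(t) - t` vanishes in it. To see that this forces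
`f = t`, let `H(f)` act on the free `K[t]`-module with basis `e₀, e₁, …` by `t eₙ = λₙ eₙ`,
`x eₙ = eₙ₊₁`, `y eₙ = (λₙ - t) eₙ₋₁`, where `λₙ = f ∘ ⋯ ∘ f` is the `n`-fold composite; then
`(yx - xy) e₀ = (f - t) e₀`. Conversely, for `f = t` the relations say exactly that the
generators commute, so `H(t)` is the free commutative algebra `K[t,x,y]`. -/

namespace GHA

section Verma

variable {R : Type*} [CommRing R]

def compIter (f : R[X]) : ℕ → R[X]
  | 0 => X
  | n + 1 => f.comp (compIter f n)

def weight (f : R[X]) : Module.End R (ℕ →₀ R[X]) :=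
  Finsupp.lsum R fun n => (Finsupp.lsingle n).comp (LinearMap.mulLeft R (compIter f n))

def shiftUp : Module.End R (ℕ →₀ R[X]) :=
  Finsupp.lmapDomain R[X] R Nat.succ

/-- On `e₀` the factor `compIter f 0 - X` vanishes, so the truncation `0 - 1 = 0` is harmless. -/
def shiftDown (f : R[X]) : Module.End R (ℕ →₀ R[X]) :=
  Finsupp.lsum R fun n =>
    (Finsupp.lsingle (n - 1)).comp (LinearMap.mulLeft R (compIter f n - X))

variable (f : R[X]) (n : ℕ) (a : R[X])

@[simp] lemma weight_single :
    weight f (Finsupp.single n a) = Finsupp.single n (compIter f n * a) := by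
  simp [weight]

@[simp] lemma shiftUp_single : shiftUp (Finsupp.single n a) = Finsupp.single (n + 1) a := by
  simp [shiftUp]

@[simp] lemma shiftDown_single :
    shiftDown f (Finsupp.single n a) = Finsupp.single (n - 1) ((compIter f n - X) * a) := by
  simp [shiftDown]

lemma aeval_weight_single (p : R[X]) :
    aeval (weight f) p (Finsupp.single n a) = Finsupp.single n (p.comp (compIter f n) * a) := by
  induction p using Polynomial.induction_on generalizing a with
  | C c => simp [Finsupp.smul_single, Algebra.smul_def]
  | add p q hp hq => simp [hp, hq, add_mul]
  | monomial k c ih =>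
    rw [pow_succ, ← mul_assoc, map_mul, aeval_X, Module.End.mul_apply, weight_single, ih,
      mul_comp (C c * X ^ k), X_comp, mul_assoc]

lemma weight_mul_shiftUp : weight f * shiftUp = shiftUp * aeval (weight f) f := by
  refine Finsupp.lhom_ext fun n a => ?_
  simp only [Module.End.mul_apply, shiftUp_single, weight_single, aeval_weight_single]
  rfl

lemma shiftDown_mul_weight : shiftDown f * weight f = aeval (weight f) f * shiftDown f := by
  refine Finsupp.lhom_ext fun n a => ?_
  cases n <;> simp only [Module.End.mul_apply, shiftDown_single, weight_single,
    aeval_weight_single, compIter, sub_self, zero_mul, Finsupp.single_zero, map_zero,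
    Nat.add_sub_cancel]
  ring_nf

lemma shiftDown_mul_shiftUp_sub :
    shiftDown f * shiftUp - shiftUp * shiftDown f = aeval (weight f) f - weight f := by
  refine Finsupp.lhom_ext fun n a => ?_
  cases n <;> simp only [LinearMap.sub_apply, Module.End.mul_apply, shiftDown_single, weight_single,
    shiftUp_single, aeval_weight_single, compIter, sub_self, zero_mul, Finsupp.single_zero,
    map_zero, Nat.add_sub_cancel, sub_zero, ← Finsupp.single_sub] <;> ring_nf

lemma eq_X_of_shiftDown_mul_shiftUp (h : shiftDown f * shiftUp = shiftUp * shiftDown f) :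
    f = X := by
  have := congr($h (Finsupp.single 0 1))
  simp only [Module.End.mul_apply, shiftUp_single, shiftDown_single, compIter, sub_self,
    zero_mul, Finsupp.single_zero, map_zero] at this
  rwa [mul_one, comp_X, Finsupp.single_eq_zero, sub_eq_zero] at this

end Verma

theorem _root_.FreeAlgebra.commute_of_surjective {R A ι : Type*} [CommSemiring R] [Semiring A]
    [Algebra R A] {φ : FreeAlgebra R ι →ₐ[R] A} (hφ : Function.Surjective φ)
    (h : ∀ i j, Commute (φ (FreeAlgebra.ι R i)) (φ (FreeAlgebra.ι R j))) (a b : A) :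
    Commute a b := by
  have hgen : Algebra.adjoin R (Set.range (φ ∘ FreeAlgebra.ι R)) = ⊤ := by
    rw [Algebra.adjoin_range_eq_range_freeAlgebra_lift, FreeAlgebra.lift_comp_ι,
      AlgHom.range_eq_top]
    exact hφ
  have mem (c : A) : c ∈ Algebra.adjoin R (Set.range (φ ∘ FreeAlgebra.ι R)) := hgen ▸ trivial
  refine Algebra.commute_of_mem_adjoin_of_forall_mem_commute (mem b) ?_
  rintro _ ⟨j, rfl⟩
  refine (Algebra.commute_of_mem_adjoin_of_forall_mem_commute (mem a) ?_).symm
  rintro _ ⟨i, rfl⟩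
  exact h j i

variable {K}

def toEnd (f : K[X]) : GHA K f →ₐ[K] Module.End K (ℕ →₀ K[X]) :=
  RingQuot.liftAlgHom K ⟨FreeAlgebra.lift K ![weight f, shiftUp, shiftDown f], by
    rintro _ _ ⟨⟩ <;>
      simp only [map_mul, map_sub, ← aeval_algHom_apply, lift_ι_apply, Matrix.cons_val]
    · exact weight_mul_shiftUp f
    · exact shiftDown_mul_weight f
    · exact shiftDown_mul_shiftUp_sub f⟩

theorem eq_X_of_mul_comm {f : K[X]} (h : ∀ a b : GHA K f, a * b = b * a) : f = X := by
  apply eq_X_of_shiftDown_mul_shiftUp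
  simpa [toEnd, RingQuot.liftAlgHom_mkAlgHom_apply] using
    congr(toEnd f $(h (RingQuot.mkAlgHom K _ (ι K 2)) (RingQuot.mkAlgHom K _ (ι K 1))))

theorem mul_comm_of_eq_X (a b : GHA K (X : K[X])) : a * b = b * a := by
  refine FreeAlgebra.commute_of_surjective (RingQuot.mkAlgHom_surjective K _) ?_ a b
  have h1 := RingQuot.mkAlgHom_rel K (ghaRel.r1 (K := K) (f := X))
  have h2 := RingQuot.mkAlgHom_rel K (ghaRel.r2 (K := K) (f := X))
  have h3 := RingQuot.mkAlgHom_rel K (ghaRel.r3 (K := K) (f := X))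
  simp only [map_mul, map_sub, aeval_X, sub_self, map_zero, sub_eq_zero] at h1 h2 h3
  intro i j
  fin_cases i <;> fin_cases j
  all_goals first
    | exact .refl _ | exact h1 | exact h1.symm | exact h2 | exact h2.symm | exact h3 | exact h3.symm

instance : CommRing (GHA K (X : K[X])) :=
  { (inferInstance : Ring (GHA K (X : K[X]))) with mul_comm := mul_comm_of_eq_X }

def toMvPolynomial : GHA K (X : K[X]) →ₐ[K] MvPolynomial (Fin 3) K :=
  RingQuot.liftAlgHom K ⟨FreeAlgebra.lift K MvPolynomial.X, by
    rintro _ _ ⟨⟩ <;>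
      simp only [map_mul, map_sub, aeval_X, lift_ι_apply, sub_self, map_zero] <;> ring⟩

def equivMvPolynomial : GHA K (X : K[X]) ≃ₐ[K] MvPolynomial (Fin 3) K :=
  AlgEquiv.ofAlgHom toMvPolynomial (MvPolynomial.aeval fun i => RingQuot.mkAlgHom K _ (ι K i))
    (MvPolynomial.algHom_ext fun i => by simp [toMvPolynomial, RingQuot.liftAlgHom_mkAlgHom_apply])
    (RingQuot.ringQuot_ext' _ _ _ <| FreeAlgebra.hom_ext <| funext fun i => by
      simp [toMvPolynomial, RingQuot.liftAlgHom_mkAlgHom_apply])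

end GHA

/-- `H(f)` is commutative iff `f = t`; in that case
`H(f) ≅ K[t,x,y]`, the polynomial ring in three variables. -/
theorem stmt9 (f : Polynomial K) :
    ((∀ a b : GHA K f, a * b = b * a) ↔ f = X) ∧
      (f = X → Nonempty (GHA K f ≃ₐ[K] MvPolynomial (Fin 3) K)) := by
  refine ⟨⟨GHA.eq_X_of_mul_comm, ?_⟩, ?_⟩ <;> rintro rfl
  · exact GHA.mul_comm_of_eq_X
  · exact ⟨GHA.equivMvPolynomial⟩

end
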